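/- A frame validates the axioms ⟨e⟩p → ⟨e⁺⟩p, ⟨e⟩⟨e⁺⟩p → ⟨e⁺⟩p, and ⟨e⁺⟩p → ⟨e⟩p ∨ ⟨e⁺⟩(¬p ∧ ⟨e⟩p) if and only if R_{e⁺} is the transitive closure of R_e. -/

import Mathlib

inductive Fm (A : Type) : Type
  | bot : Fm A
  | var : ℕ → Fm A
  | imp : Fm A → Fm A → Fm A
  | dia : A → Fm A → Fm A

namespace Fm
variable {A B : Type}
def neg (φ : Fm A) : Fm A := imp φ bot
def disj (φ ψ : Fm A) : Fm A := imp (neg φ) ψ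
def conj (φ ψ : Fm A) : Fm A := neg (imp φ (neg ψ))
def equiv (φ ψ : Fm A) : Fm A := conj (imp φ ψ) (imp ψ φ)
def box (a : A) (φ : Fm A) : Fm A := neg (dia a (neg φ))
def map (f : A → B) : Fm A → Fm B
  | bot => bot
  | var n => var n
  | imp φ ψ => imp (map f φ) (map f ψ)
  | dia a φ => dia (f a) (map f φ)
end Fm

structure Model (A : Type) where
  W : Type
  R : A → W → W → Prop
  V : ℕ → W → Prop

def Sat {A : Type} (M : Model A) : M.W → Fm A → Prop
  | _, .bot => False
  | x, .var n => M.V n x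
  | x, .imp φ ψ => Sat M x φ → Sat M x ψ
  | x, .dia a φ => ∃ y, M.R a x y ∧ Sat M y φ

def Model.valid {A : Type} (M : Model A) (φ : Fm A) : Prop := ∀ x, Sat M x φ

def Model.validSet {A : Type} (M : Model A) (L : Set (Fm A)) : Prop := ∀ φ ∈ L, M.valid φ

def SubClosed {A : Type} (Γ : Set (Fm A)) : Prop :=
  (∀ φ ψ : Fm A, Fm.imp φ ψ ∈ Γ → φ ∈ Γ ∧ ψ ∈ Γ) ∧
  (∀ (a : A) (φ : Fm A), Fm.dia a φ ∈ Γ → φ ∈ Γ)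

/-- `x ∼_Γ y`: x and y satisfy the same formulas of Γ in M. -/
def ModEqv {A : Type} (M : Model A) (Γ : Set (Fm A)) (x y : M.W) : Prop :=
  ∀ φ ∈ Γ, (Sat M x φ ↔ Sat M y φ)

def eqvSetoid {A : Type} (M : Model A) (Γ : Set (Fm A)) : Setoid M.W :=
  ⟨ModEqv M Γ, ⟨fun _ _ _ => Iff.rfl, fun h φ hφ => (h φ hφ).symm,
    fun h1 h2 φ hφ => (h1 φ hφ).trans (h2 φ hφ)⟩⟩

def filtModel {A : Type} (M : Model A) (s : Setoid M.W)
    (R' : A → Quotient s → Quotient s → Prop) (V' : ℕ → Quotient s → Prop) : Model A :=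
  ⟨Quotient s, R', V'⟩

/-- `(filtModel M s R' V')` is a Γ-filtration of M through the equivalence s. -/
structure IsGammaFiltration {A : Type} (M : Model A) (Γ : Set (Fm A)) (s : Setoid M.W)
    (R' : A → Quotient s → Quotient s → Prop) (V' : ℕ → Quotient s → Prop) : Prop where
  refines : ∀ x y : M.W, s.r x y → ModEqv M Γ x y
  val : ∀ n : ℕ, Fm.var n ∈ Γ → ∀ x : M.W, (V' n (Quotient.mk s x) ↔ M.V n x)
  min_sub : ∀ (a : A) (x y : M.W), M.R a x y → R' a (Quotient.mk s x) (Quotient.mk s y)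
  sub_max : ∀ (a : A) (x y : M.W), R' a (Quotient.mk s x) (Quotient.mk s y) →
      ∀ φ : Fm A, Fm.dia a φ ∈ Γ → Sat M y φ → Sat M x (Fm.dia a φ)

/-- L admits definable filtration. -/
def AdmitsDefFilt {A : Type} (L : Set (Fm A)) : Prop :=
  ∀ M : Model A, M.validSet L → ∀ Γ : Set (Fm A), Γ.Finite → SubClosed Γ →
    ∃ Δ : Set (Fm A), Δ.Finite ∧ Γ ⊆ Δ ∧
      ∃ (R' : A → Quotient (eqvSetoid M Δ) → Quotient (eqvSetoid M Δ) → Prop)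
        (V' : ℕ → Quotient (eqvSetoid M Δ) → Prop),
        Finite (Quotient (eqvSetoid M Δ)) ∧
        IsGammaFiltration M Γ (eqvSetoid M Δ) R' V' ∧
        (filtModel M (eqvSetoid M Δ) R' V').validSet L

/-! The proof is by correspondence: the first two axioms say `R_e ⊆ R_{e⁺}` and
`R_e ∘ R_{e⁺} ⊆ R_{e⁺}`, which together give `R_e⁺ ⊆ R_{e⁺}`. The third is an induction
principle: instantiated with `p := ¬ R_e⁺ x ·`, it forbids an `R_{e⁺}`-successor of `x` outside
`R_e⁺ x`, since `p` cannot become true along an `R_e`-step out of `R_e⁺ x`. Conversely, along an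
`R_e`-path to a `p`-point, the last point where `p` fails witnesses the third axiom
(if there is none, the first step already lands in `p`). -/

namespace Relation

variable {W : Type} {Re Rp : W → W → Prop}

def IsInductiveOver (Re Rp : W → W → Prop) : Prop :=
  ∀ (p : W → Prop) (x y : W), Rp x y → p y →
    (∃ w, Re x w ∧ p w) ∨ ∃ w, Rp x w ∧ ¬ p w ∧ ∃ u, Re w u ∧ p u

theorem isInductiveOver_transGen (Re : W → W → Prop) : IsInductiveOver Re (TransGen Re) := by
  intro p x y hxy hy
  induction hxy with
  | single hxy => exact Or.inl ⟨_, hxy, hy⟩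
  | @tail w u hxw hwu ih =>
    by_cases hw : p w
    · exact ih hw
    · exact Or.inr ⟨w, hxw, hw, u, hwu, hy⟩

theorem IsInductiveOver.le_transGen (h : IsInductiveOver Re Rp) {x y : W} (hxy : Rp x y) :
    TransGen Re x y := by
  by_contra hny
  rcases h (fun z => ¬ TransGen Re x z) x y hxy hny with ⟨w, hxw, hw⟩ | ⟨w, -, hw, u, hwu, hu⟩
  · exact hw (.single hxw)
  · exact hu ((not_not.1 hw).tail hwu)

theorem transGen_le_of_head_closed (hstep : ∀ x y, Re x y → Rp x y)
    (hhead : ∀ x y z, Re x y → Rp y z → Rp x z) {x y : W} (hxy : TransGen Re x y) : Rp x y := by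
  induction hxy using TransGen.head_induction_on with
  | single h => exact hstep _ _ h
  | head h _ ih => exact hhead _ _ _ h ih

end Relation

open Relation

section BoolFrame

variable {W : Type} (Re Rp : W → W → Prop)

def stepAxiom : Fm Bool := Fm.imp (Fm.dia true (Fm.var 0)) (Fm.dia false (Fm.var 0))

def headAxiom : Fm Bool := Fm.imp (Fm.dia true (Fm.dia false (Fm.var 0))) (Fm.dia false (Fm.var 0))

def inductionAxiom : Fm Bool :=
  Fm.imp (Fm.dia false (Fm.var 0))
    (Fm.disj (Fm.dia true (Fm.var 0))
      (Fm.dia false (Fm.conj (Fm.neg (Fm.var 0)) (Fm.dia true (Fm.var 0)))))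

def Validates (φ : Fm Bool) : Prop :=
  ∀ V x, Sat (Model.mk W (fun b : Bool => if b then Re else Rp) V) x φ

theorem validates_stepAxiom_iff : Validates Re Rp stepAxiom ↔ ∀ x y, Re x y → Rp x y := by
  constructor
  · intro h x y hxy
    obtain ⟨w, hxw, hwy : w = y⟩ := h (fun _ z => z = y) x ⟨y, hxy, rfl⟩
    exact hwy ▸ hxw
  · rintro h V x ⟨y, hxy, hy⟩
    exact ⟨y, h x y hxy, hy⟩

theorem validates_headAxiom_iff :
    Validates Re Rp headAxiom ↔ ∀ x y z, Re x y → Rp y z → Rp x z := by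
  constructor
  · intro h x y z hxy hyz
    obtain ⟨w, hxw, hwz : w = z⟩ := h (fun _ w => w = z) x ⟨y, hxy, z, hyz, rfl⟩
    exact hwz ▸ hxw
  · rintro h V x ⟨y, hxy, z, hyz, hz⟩
    exact ⟨z, h x y z hxy hyz, hz⟩

theorem validates_inductionAxiom_iff : Validates Re Rp inductionAxiom ↔ IsInductiveOver Re Rp := by
  constructor
  · intro h p x y hxy hy
    refine or_iff_not_imp_left.2 fun hnx => ?_
    obtain ⟨w, hxw, hw⟩ := h (fun _ => p) x ⟨y, hxy, hy⟩ hnx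
    obtain ⟨hnw, hwp⟩ := Classical.not_imp.1 hw
    exact ⟨w, hxw, hnw, not_not.1 hwp⟩
  · rintro h V x ⟨y, hxy, hy⟩ hnx
    rcases h (V 0) x y hxy hy with hx | ⟨w, hxw, hw, u, hwu, hu⟩
    · exact absurd hx hnx
    · exact ⟨w, hxw, fun hc => hc hw ⟨u, hwu, hu⟩⟩

end BoolFrame

/-- A frame validates A3, A4, A5 iff R_{e⁺} is the transitive closure of R_e.
Modalities: `true` is ⟨e⟩ (relation Re), `false` is ⟨e⁺⟩ (relation Rp). -/
theorem transitive_closure_axioms_characterization (W : Type) (Re Rp : W → W → Prop) :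
    (∀ (V : ℕ → W → Prop) (x : W),
      Sat (Model.mk W (fun b : Bool => if b then Re else Rp) V) x
        (Fm.imp (Fm.dia true (Fm.var 0)) (Fm.dia false (Fm.var 0))) ∧
      Sat (Model.mk W (fun b : Bool => if b then Re else Rp) V) x
        (Fm.imp (Fm.dia true (Fm.dia false (Fm.var 0))) (Fm.dia false (Fm.var 0))) ∧
      Sat (Model.mk W (fun b : Bool => if b then Re else Rp) V) x
        (Fm.imp (Fm.dia false (Fm.var 0))
          (Fm.disj (Fm.dia true (Fm.var 0))
            (Fm.dia false (Fm.conj (Fm.neg (Fm.var 0)) (Fm.dia true (Fm.var 0))))))) ↔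
    (∀ x y : W, Rp x y ↔ Relation.TransGen Re x y) := by
  simp only [forall_and]
  refine ((validates_stepAxiom_iff Re Rp).and ((validates_headAxiom_iff Re Rp).and
    (validates_inductionAxiom_iff Re Rp))).trans ⟨?_, ?_⟩
  · rintro ⟨hstep, hhead, hind⟩ x y
    exact ⟨hind.le_transGen, transGen_le_of_head_closed hstep hhead⟩
  · intro h
    obtain rfl : Rp = TransGen Re := funext₂ fun x y => propext (h x y)
    exact ⟨fun _ _ => .single, fun _ _ _ => .head, isInductiveOver_transGen Re⟩
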